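/- arXiv:1304.6297 — 3 statements merged into one kernel-verified Lean document; each statement's English description precedes it below -/
import Mathlib

section
/- Let σ and σ̄ be two substitutions with σ ⋈_C σ̄, and let g be a guard all of whose constants belong to C and all of whose variables lie in the common domain of σ and σ̄. Then σ satisfies g if and only if σ̄ satisfies g. -/
noncomputable section
open Classical

/-- A substitution: a partial map from variables to letters. -/
def dom {X A : Type*} (σ : X → Option A) : Set X := {x | σ x ≠ none}

def codom {X A : Type*} (σ : X → Option A) : Set A := {a | ∃ x, σ x = some a}

/-- C-coherence of two substitutions with equal domains. -/
def Coh {X A : Type*} (C : Set A) (σ' σ : X → Option A) : Prop :=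
  dom σ' = dom σ ∧
  (∀ x a b, σ' x = some a → σ x = some b →
      (a ∈ C ↔ b ∈ C) ∧ ((a ∈ C ∨ b ∈ C) → a = b)) ∧
  (∀ x y a b a' b', σ' x = some a → σ' y = some b →
      σ x = some a' → σ y = some b' → (a = b ↔ a' = b'))

/-- Union of two substitutions (intended for disjoint domains). -/
def union {X A : Type*} (σ γ : X → Option A) : X → Option A :=
  fun x => match σ x with | some a => some a | none => γ x

/-- Restriction of a substitution to a set of variables. -/
def restrict {X A : Type*} (σ : X → Option A) (D : Set X) : X → Option A :=
  fun x => if x ∈ D then σ x else none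

/-- The singleton substitution {x ↦ a}. -/
def single {X A : Type*} (x : X) (a : A) : X → Option A :=
  fun z => if z = x then some a else none

/-- Atomic guard: (a = x) with a a constant, or (x = y) between variables. -/
inductive Atom (X A : Type*) where
  | const : A → X → Atom X A
  | eq : X → X → Atom X A

/-- A guard is a finite conjunction (list) of atoms. -/
abbrev Guard (X A : Type*) := List (Atom X A)

def atomVars {X A : Type*} : Atom X A → Set X
  | Atom.const _ x => {x}
  | Atom.eq x y => {x, y}

def atomConsts {X A : Type*} : Atom X A → Set A
  | Atom.const a _ => {a}
  | Atom.eq _ _ => ∅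

/-- The variables occurring in a guard. -/
def gvars {X A : Type*} (g : Guard X A) : Set X := {x | ∃ t ∈ g, x ∈ atomVars t}

/-- The constants occurring in a guard. -/
def gconsts {X A : Type*} (g : Guard X A) : Set A := {a | ∃ t ∈ g, a ∈ atomConsts t}

/-- A (partial) substitution satisfies a guard if every atom holds (all values defined). -/
def sat {X A : Type*} (σ : X → Option A) (g : Guard X A) : Prop :=
  ∀ t ∈ g, match t with
    | Atom.const a x => σ x = some a
    | Atom.eq x y => σ x ≠ none ∧ σ x = σ y


lemma coh_symm {X A : Type*} {C : Set A} {σ σ' : X → Option A} (h : Coh C σ σ') :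
    Coh C σ' σ := by
  obtain ⟨h1, h2, h3⟩ := h
  refine ⟨h1.symm, ?_, ?_⟩
  · intro x a b ha hb
    obtain ⟨i, e⟩ := h2 x b a hb ha
    exact ⟨i.symm, fun o => (e o.symm).symm⟩
  · intro x y a b a' b' hx hy hx' hy'
    exact (h3 x y a' b' a b hx' hy' hx hy).symm

lemma sat_mono {X A : Type*} {C : Set A} {σ σ' : X → Option A}
    (h : Coh C σ σ') {g : Guard X A}
    (hc : gconsts g ⊆ C) (hv : gvars g ⊆ dom σ) :
    sat σ g → sat σ' g := by
  intro hs t ht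
  have hdom : ∀ x ∈ dom σ, ∃ a, σ' x = some a := by
    intro x hx
    have : x ∈ dom σ' := h.1 ▸ hx
    exact Option.ne_none_iff_exists'.mp this
  cases t with
  | const a x =>
    have haC : a ∈ C := hc ⟨_, ht, rfl⟩
    have hx : x ∈ dom σ := hv ⟨_, ht, rfl⟩
    obtain ⟨b, hb⟩ := hdom x hx
    have hsa : σ x = some a := hs _ ht
    have := (h.2.1 x a b hsa hb).2 (Or.inl haC)
    simp only [sat]
    rw [hb, ← this]
  | eq x y =>
    have hx : x ∈ dom σ := hv ⟨_, ht, Or.inl rfl⟩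
    have hy : y ∈ dom σ := hv ⟨_, ht, Or.inr rfl⟩
    obtain ⟨a, ha⟩ := Option.ne_none_iff_exists'.mp hx
    obtain ⟨b, hb⟩ := Option.ne_none_iff_exists'.mp hy
    obtain ⟨a', ha'⟩ := hdom x hx
    obtain ⟨b', hb'⟩ := hdom y hy
    have heq : σ x = σ y := (hs _ ht).2
    have hab : a = b := by
      rw [ha, hb] at heq; exact Option.some_injective _ heq
    have : a' = b' := (h.2.2 x y a b a' b' ha hb ha' hb').mp hab
    refine ⟨by rw [ha']; simp, by rw [ha', hb', this]⟩

/-- Coherent substitutions satisfy the same guards with constants in C. -/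
theorem stmt_6 {X A : Type*} (C : Set A) (σ σ' : X → Option A)
    (h : Coh C σ σ') (g : Guard X A)
    (hc : gconsts g ⊆ C) (hv : gvars g ⊆ dom σ) :
    sat σ g ↔ sat σ' g :=
  ⟨sat_mono h hc hv, sat_mono (coh_symm h) hc (h.1 ▸ hv)⟩
end
end

section
/- Let S₁, S₂ be sets of letters with S₂ \ codom(M₂) nonempty whenever needed, let M₁, γ₁ be substitutions with values in S₁ and M₂ a substitution with values in S₂, such that dom(M₁) ∩ dom(γ₁) = ∅ and M₁ ⋈_C M₂ where C = S₁ ∩ S₂. Suppose dom(γ₁) = {x} is a singleton. Define γ₂ as follows: if γ₁(x) ∈ C set γ₂ = γ₁; if γ₁(x) = M₁(y) for some y ∈ dom(M₁) with γ₁(x) ∉ C set γ₂ = {x ↦ M₂(y)}; otherwise (γ₁(x) ∈ S₁ \ (C ∪ codom(M₁))) set γ₂ = {x ↦ b} for any fixed b ∈ S₂ \ (C ∪ codom(M₂)). Then (M₁ ⊎ γ₁) ⋈_C (M₂ ⊎ γ₂). -/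
noncomputable section
open Classical

/-- Single-step extension (the function Θ): the defined γ₂ preserves coherence. -/
theorem stmt_8 {X A : Type*} (S₁ S₂ : Set A) (C : Set A) (hC : C = S₁ ∩ S₂)
    (M₁ γ₁ M₂ : X → Option A)
    (hM₁ : codom M₁ ⊆ S₁) (hγ₁ : codom γ₁ ⊆ S₁) (hM₂ : codom M₂ ⊆ S₂)
    (hdisj : dom M₁ ∩ dom γ₁ = ∅)
    (hcoh : Coh C M₁ M₂)
    (x : X) (hx : dom γ₁ = {x}) (c : A) (hc : γ₁ x = some c)
    (b : A) (hb : b ∈ S₂ \ (C ∪ codom M₂))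
    (γ₂ : X → Option A)
    (hγ₂ :
      (c ∈ C ∧ γ₂ = γ₁) ∨
      (c ∉ C ∧ ∃ y d, M₁ y = some c ∧ M₂ y = some d ∧ γ₂ = single x d) ∨
      (c ∉ C ∧ c ∉ codom M₁ ∧ γ₂ = single x b)) :
    Coh C (union M₁ γ₁) (union M₂ γ₂) := by
  obtain ⟨hdom, hpair, heq⟩ := hcoh
  have hxdom : x ∈ dom γ₁ := by simp [dom, hc]
  have hM1x : M₁ x = none := by
    by_contra h
    have : x ∈ dom M₁ ∩ dom γ₁ := ⟨h, hxdom⟩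
    rw [hdisj] at this
    exact this
  have hM2x : M₂ x = none := by
    by_contra h
    have hx2 : x ∈ dom M₁ := by rw [hdom]; exact h
    exact hx2 hM1x
  have hγz : ∀ z, z ≠ x → γ₁ z = none := by
    intro z hz
    by_contra h
    have : z ∈ dom γ₁ := h
    rw [hx] at this
    exact hz this
  -- extract the common data about γ₂
  obtain ⟨c', hc', hiff, heqC, hkey, hγ₂z⟩ :
      ∃ c', γ₂ x = some c' ∧ (c ∈ C ↔ c' ∈ C) ∧ ((c ∈ C ∨ c' ∈ C) → c = c') ∧
        (∀ w a a', M₁ w = some a → M₂ w = some a' → (c = a ↔ c' = a')) ∧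
        (∀ z, z ≠ x → γ₂ z = none) := by
    rcases hγ₂ with ⟨hcC, rfl⟩ | ⟨hcC, y, d, hy1, hy2, rfl⟩ | ⟨hcC, hcod, rfl⟩
    · refine ⟨c, hc, Iff.rfl, fun _ => rfl, ?_, hγz⟩
      intro w a a' hw hw'
      have hp := hpair w a a' hw hw'
      constructor
      · rintro rfl
        exact hp.2 (Or.inl hcC)
      · rintro rfl
        exact (hp.2 (Or.inr hcC)).symm
    · have hyd := hpair y c d hy1 hy2
      have hdC : d ∉ C := fun h => hcC (hyd.1.mpr h)
      refine ⟨d, by simp [single], ?_, ?_, ?_, ?_⟩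
      · constructor <;> intro h <;> [exact absurd h hcC; exact absurd h hdC]
      · rintro (h | h) <;> [exact absurd h hcC; exact absurd h hdC]
      · intro w a a' hw hw'
        exact heq y w c a d a' hy1 hw hy2 hw'
      · intro z hz; simp [single, hz]
    · have hbC : b ∉ C := fun h => hb.2 (Or.inl h)
      have hbcod : b ∉ codom M₂ := fun h => hb.2 (Or.inr h)
      refine ⟨b, by simp [single], ?_, ?_, ?_, ?_⟩
      · constructor <;> intro h <;> [exact absurd h hcC; exact absurd h hbC]
      · rintro (h | h) <;> [exact absurd h hcC; exact absurd h hbC]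
      · intro w a a' hw hw'
        constructor
        · rintro rfl; exact absurd ⟨w, hw⟩ hcod
        · rintro rfl; exact absurd ⟨w, hw'⟩ hbcod
      · intro z hz; simp [single, hz]
  have hu1 : ∀ z, union M₁ γ₁ z = if z = x then some c else M₁ z := by
    intro z
    by_cases hz : z = x
    · subst hz; simp [union, hM1x, hc]
    · simp only [hz, if_false, union]
      cases h : M₁ z <;> simp [hγz z hz]
  have hu2 : ∀ z, union M₂ γ₂ z = if z = x then some c' else M₂ z := by
    intro z
    by_cases hz : z = x
    · subst hz; simp [union, hM2x, hc']
    · simp only [hz, if_false, union]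
      cases h : M₂ z <;> simp [hγ₂z z hz]
  have hdn : ∀ z, (M₁ z ≠ none ↔ M₂ z ≠ none) := by
    intro z
    constructor <;> intro h
    · have h' : z ∈ dom M₁ := h
      rw [hdom] at h'; exact h'
    · have h' : z ∈ dom M₂ := h
      rw [← hdom] at h'; exact h'
  refine ⟨?_, ?_, ?_⟩
  · ext z
    by_cases hz : z = x
    · simp [dom, hu1, hu2, hz]
    · simpa [dom, hu1, hu2, hz] using hdn z
  · intro z a₁ b₁ h1 h2
    rw [hu1 z] at h1
    rw [hu2 z] at h2
    by_cases hz : z = x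
    · rw [if_pos hz] at h1 h2
      obtain rfl : c = a₁ := Option.some.inj h1
      obtain rfl : c' = b₁ := Option.some.inj h2
      exact ⟨hiff, heqC⟩
    · rw [if_neg hz] at h1 h2
      exact hpair z a₁ b₁ h1 h2
  · intro z w a₁ b₁ a₁' b₁' h1 h2 h3 h4
    rw [hu1 z] at h1
    rw [hu1 w] at h2
    rw [hu2 z] at h3
    rw [hu2 w] at h4
    by_cases hz : z = x <;> by_cases hw : w = x
    · rw [if_pos hz] at h1 h3
      rw [if_pos hw] at h2 h4
      obtain rfl : c = a₁ := Option.some.inj h1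
      obtain rfl : c = b₁ := Option.some.inj h2
      obtain rfl : c' = a₁' := Option.some.inj h3
      obtain rfl : c' = b₁' := Option.some.inj h4
      simp
    · rw [if_pos hz] at h1 h3
      rw [if_neg hw] at h2 h4
      obtain rfl : c = a₁ := Option.some.inj h1
      obtain rfl : c' = a₁' := Option.some.inj h3
      exact hkey w b₁ b₁' h2 h4
    · rw [if_neg hz] at h1 h3
      rw [if_pos hw] at h2 h4
      obtain rfl : c = b₁ := Option.some.inj h2
      obtain rfl : c' = b₁' := Option.some.inj h4
      have := hkey z a₁ a₁' h1 h3
      constructor <;> intro h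
      · exact (this.mp h.symm).symm
      · exact (this.mpr h.symm).symm
    · rw [if_neg hz] at h1 h3
      rw [if_neg hw] at h2 h4
      exact heq z w a₁ b₁ a₁' b₁' h1 h2 h3 h4
end
end

section
/- (Single-step extension preserves coherence, existential form.) Let M₁ be a substitution into S₁ and M₂ a substitution into S₂ with M₁ ⋈_C M₂ where C = S₁ ∩ S₂, and assume |S₂ \ S₁| > |dom(M₂)|. Then for every substitution γ₁ into S₁ with dom(γ₁) disjoint from dom(M₁), there exists a substitution γ₂ into S₂ with dom(γ₂) = dom(γ₁) such that (M₁ ⊎ γ₁) ⋈_C (M₂ ⊎ γ₂). -/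
noncomputable section
open Classical

universe u v

/-! Coherence `σ ⋈_C τ` says exactly that `τ = g ∘ σ` for a renaming `g` of the letters of `σ`:
injective on them, the identity on `C`, and sending letters outside `C` outside `C`.
Take the renaming `f` with `M₂ = f ∘ M₁` and extend it to the letters of `γ₁`: those in `C` or
in the image of `M₁` are already handled, and the remaining ones are sent injectively to letters
of `S₂ \ S₁` unused by `M₂`. There are enough of these because
`|codom γ₁| + |codom M₂| ≤ |dom γ₁| + |dom M₂| < |S₂ \ S₁|`. Then `γ₂ := g ∘ γ₁`. -/

section Substitution

open Cardinal

variable {X A : Type*}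

@[simp]
lemma mem_dom {σ : X → Option A} {x : X} : x ∈ dom σ ↔ σ x ≠ none := Iff.rfl

lemma dom_map (σ : X → Option A) (g : A → A) : dom (fun x => (σ x).map g) = dom σ := by
  ext x
  simp

lemma codom_map (σ : X → Option A) (g : A → A) : codom (fun x => (σ x).map g) = g '' codom σ := by
  ext b
  simp only [codom, Option.map_eq_some_iff, Set.mem_ofPred_eq, Set.mem_image]
  grind

lemma exists_eq_some_of_dom_eq {σ τ : X → Option A} (h : dom σ = dom τ) {x : X} {a : A}
    (hx : σ x = some a) : ∃ b, τ x = some b :=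
  Option.ne_none_iff_exists'.1 (show x ∈ dom τ from h ▸ (show x ∈ dom σ by simp [hx]))

lemma eq_none_of_dom_eq {σ τ : X → Option A} (h : dom σ = dom τ) {x : X} (hx : σ x = none) :
    τ x = none := by
  by_contra hτ
  exact (show x ∈ dom σ from h ▸ hτ) hx

lemma codom_union_subset (σ γ : X → Option A) : codom (union σ γ) ⊆ codom σ ∪ codom γ := by
  rintro a ⟨x, hx⟩
  cases hσ : σ x with
  | none => exact Or.inr ⟨x, by simpa [union, hσ] using hx⟩
  | some b => exact Or.inl ⟨x, by simpa [union, hσ] using hx⟩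

lemma union_map_map {σ γ : X → Option A} {f g : A → A} (hfg : Set.EqOn g f (codom σ)) :
    union (fun x => (σ x).map f) (fun x => (γ x).map g) = fun x => (union σ γ x).map g := by
  funext x
  cases hσ : σ x with
  | none => simp [union, hσ]
  | some a => simp [union, hσ, hfg ⟨x, hσ⟩]

lemma lift_mk_codom_le {X : Type u} {A : Type v} (σ : X → Option A) :
    lift.{u} #(codom σ) ≤ lift.{v} #(dom σ) := by
  refine lift_mk_le_lift_mk_of_surjective
    (f := fun x : dom σ => ⟨(σ x).get (Option.isSome_iff_ne_none.2 x.2), x, by simp⟩) ?_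
  rintro ⟨a, x, hx⟩
  exact ⟨⟨x, by simp [hx]⟩, by simp [hx]⟩

end Substitution

section Renaming

open Set

variable {A : Type*}

structure IsRenaming (C s : Set A) (g : A → A) : Prop where
  injOn : InjOn g s
  eqOn : EqOn g id C
  mapsTo_compl : MapsTo g (s \ C) Cᶜ

namespace IsRenaming

variable {C s t T : Set A} {g e : A → A}

lemma mem_iff (hg : IsRenaming C s g) {a : A} (ha : a ∈ s ∪ C) : g a ∈ C ↔ a ∈ C := by
  by_cases haC : a ∈ C
  · simp [hg.eqOn haC, haC]
  · simpa [haC] using hg.mapsTo_compl ⟨ha.resolve_right haC, haC⟩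

lemma mono (hg : IsRenaming C t g) (hst : s ⊆ t) : IsRenaming C s g :=
  ⟨hg.injOn.mono hst, hg.eqOn, hg.mapsTo_compl.mono_left (sdiff_subset_sdiff_left hst)⟩

lemma union_self (hg : IsRenaming C s g) : IsRenaming C (s ∪ C) g := by
  refine ⟨fun a ha b hb hab => ?_, hg.eqOn, by rw [union_sdiff_right]; exact hg.mapsTo_compl⟩
  by_cases haC : a ∈ C
  · have hbC : b ∈ C := (hg.mem_iff hb).1 (hab ▸ (hg.mem_iff ha).2 haC)
    simpa [hg.eqOn haC, hg.eqOn hbC] using hab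
  · have hbC : b ∉ C := fun hbC => haC ((hg.mem_iff ha).1 (hab ▸ (hg.mem_iff hb).2 hbC))
    exact hg.injOn (ha.resolve_right haC) (hb.resolve_right hbC) hab

lemma piecewise [DecidablePred (· ∈ t)] (hg : IsRenaming C s g) (he : InjOn e t)
    (heC : MapsTo e t Cᶜ) (hts : Disjoint t s) (htC : Disjoint t C)
    (himg : Disjoint (g '' s) (e '' t)) :
    IsRenaming C (s ∪ t) (t.piecewise e g) := by
  have hs : EqOn (t.piecewise e g) g s := fun a ha =>
    piecewise_eq_of_notMem _ _ _ (hts.notMem_of_mem_right ha)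
  have hC : EqOn (t.piecewise e g) g C := fun a ha =>
    piecewise_eq_of_notMem _ _ _ (htC.notMem_of_mem_right ha)
  refine ⟨?_, hC.trans hg.eqOn, ?_⟩
  · rw [injOn_union hts.symm, hs.injOn_iff, (piecewise_eqOn t e g).injOn_iff]
    refine ⟨hg.injOn, he, fun a ha b hb hab => ?_⟩
    rw [hs ha, piecewise_eq_of_mem _ _ _ hb] at hab
    exact himg.ne_of_mem (mem_image_of_mem g ha) (mem_image_of_mem e hb) hab
  · rintro a ⟨ha | ha, haC⟩
    · rw [hs ha]
      exact hg.mapsTo_compl ⟨ha, haC⟩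
    · rw [piecewise_eq_of_mem _ _ _ ha]
      exact heC ha

lemma exists_extend (hf : IsRenaming C s g) (he : InjOn e t) (heT : MapsTo e t (T \ g '' s))
    (hTC : Disjoint T C) :
    ∃ g', IsRenaming C (s ∪ t) g' ∧ EqOn g' g s ∧ MapsTo g' t (g '' s ∪ C ∪ T) := by
  set V := t \ (s ∪ C)
  have hgs : g '' (s ∪ C) = g '' s ∪ C := by rw [image_union, hf.eqOn.image_eq_self]
  have heV : MapsTo e V (T \ g '' s) := heT.mono_left sdiff_subset
  have hg'g : EqOn (V.piecewise e g) g (s ∪ C) := fun a ha =>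
    piecewise_eq_of_notMem _ _ _ fun h => h.2 ha
  have hg' : IsRenaming C (s ∪ C ∪ V) (V.piecewise e g) := by
    refine hf.union_self.piecewise (he.mono sdiff_subset)
      (heV.mono_right fun a ha => hTC.notMem_of_mem_left ha.1) disjoint_sdiff_left
      (disjoint_sdiff_left.mono_right subset_union_right) ?_
    rw [hgs]
    exact (disjoint_union_left.2 ⟨disjoint_sdiff_right,
      hTC.symm.mono_right sdiff_subset⟩).mono_right heV.image_subset
  have ht : t ⊆ s ∪ C ∪ V := le_sup_sdiff
  refine ⟨V.piecewise e g, hg'.mono (union_subset (subset_union_left.trans subset_union_left) ht),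
    hg'g.mono subset_union_left, fun a ha => ?_⟩
  rcases ht ha with haSC | haV
  · rw [hg'g haSC]
    exact Or.inl (hgs ▸ mem_image_of_mem g haSC)
  · rw [piecewise_eq_of_mem _ _ _ haV]
    exact Or.inr (heV haV).1

end IsRenaming

end Renaming

section Coherence

variable {X A : Type*}

theorem coh_iff_exists_renaming {C : Set A} {σ τ : X → Option A} :
    Coh C σ τ ↔ ∃ g, IsRenaming C (codom σ) g ∧ τ = fun x => (σ x).map g := by
  constructor
  · rintro ⟨hdom, hC, hrel⟩
    -- `f a` is read off any preimage of `a`; the third clause of coherence makes it well defined.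
    let f : A → A := fun a => if h : ∃ x, σ x = some a then (τ h.choose).getD a else a
    have hf : ∀ x a, σ x = some a → τ x = some (f a) := by
      intro x a ha
      have h : ∃ x, σ x = some a := ⟨x, ha⟩
      obtain ⟨b, hb⟩ := exists_eq_some_of_dom_eq hdom ha
      obtain ⟨b', hb'⟩ := exists_eq_some_of_dom_eq hdom h.choose_spec
      have hfa : f a = b' := by simp [f, h, hb']
      rw [hfa, hb, (hrel x _ a a b b' ha h.choose_spec hb hb').1 rfl]
    refine ⟨f, ⟨?_, fun a haC => ?_, ?_⟩, ?_⟩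
    · rintro a ⟨x, ha⟩ b ⟨y, hb⟩ hab
      exact (hrel x y a b _ _ ha hb (hf x a ha) (hf y b hb)).2 hab
    · by_cases h : ∃ x, σ x = some a
      · obtain ⟨x, ha⟩ := h
        exact ((hC x a _ ha (hf x a ha)).2 (Or.inl haC)).symm
      · simp [f, h]
    · rintro a ⟨⟨x, ha⟩, haC⟩ hfaC
      exact haC ((hC x a _ ha (hf x a ha)).1.2 hfaC)
    · funext x
      cases hx : σ x with
      | none => exact eq_none_of_dom_eq hdom hx
      | some a => exact hf x a hx
  · rintro ⟨g, hg, rfl⟩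
    refine ⟨(dom_map σ g).symm, fun x a b ha hb => ?_, fun x y a b a' b' ha hb ha' hb' => ?_⟩
    · obtain rfl : g a = b := by simpa [ha] using hb
      have hmem := hg.mem_iff (Or.inl ⟨x, ha⟩)
      refine ⟨hmem.symm, ?_⟩
      rintro (haC | hgaC)
      · exact (hg.eqOn haC).symm
      · exact (hg.eqOn (hmem.1 hgaC)).symm
    · obtain rfl : g a = a' := by simpa [ha] using ha'
      obtain rfl : g b = b' := by simpa [hb] using hb'
      exact (hg.injOn.eq_iff ⟨x, ha⟩ ⟨y, hb⟩).symm

end Coherence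

section Cardinality

open Set Cardinal

lemma Cardinal.le_mk_sdiff_of_add_lt {α : Type*} {T W : Set α} {κ : Cardinal} (h : κ + #W < #T) :
    κ ≤ #(T \ W : Set α) := by
  by_contra! hlt
  have hT : #T ≤ κ + #W := calc
    #T ≤ #(T \ W ∪ W : Set α) := mk_le_mk_of_subset (subset_sdiff_union T W)
    _ ≤ #(T \ W : Set α) + #W := mk_union_le _ _
    _ ≤ κ + #W := add_le_add_left hlt.le _
  exact (h.trans_le hT).false

lemma exists_injOn_mapsTo_of_mk_le {α : Type*} {s t : Set α} (h : #s ≤ #t) :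
    ∃ f : α → α, InjOn f s ∧ MapsTo f s t := by
  obtain ⟨e⟩ := Cardinal.le_def _ _ |>.1 h
  refine ⟨fun a => if ha : a ∈ s then e ⟨a, ha⟩ else a, fun a ha b hb hab => ?_, fun a ha => ?_⟩
  · simp only [ha, hb, dite_true] at hab
    exact congrArg Subtype.val (e.injective (Subtype.ext hab))
  · simp [ha]

lemma exists_injOn_mapsTo_fresh {X : Type u} {A : Type v} {M γ : X → Option A} {T : Set A}
    (hdisj : Disjoint (dom M) (dom γ)) (hcard : lift.{v} #(dom M ∪ dom γ : Set X) < lift.{u} #T) :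
    ∃ e : A → A, InjOn e (codom γ) ∧ MapsTo e (codom γ) (T \ codom M) := by
  refine exists_injOn_mapsTo_of_mk_le (Cardinal.le_mk_sdiff_of_add_lt ?_)
  rw [← lift_lt.{v, u}, lift_add]
  calc lift.{u} #(codom γ) + lift.{u} #(codom M)
      ≤ lift.{v} #(dom γ) + lift.{v} #(dom M) :=
        add_le_add (lift_mk_codom_le γ) (lift_mk_codom_le M)
    _ = lift.{v} #(dom M ∪ dom γ : Set X) := by rw [mk_union_of_disjoint hdisj, lift_add, add_comm]
    _ < lift.{u} #T := hcard

end Cardinality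

theorem stmt_9_general {X : Type u} {A : Type v} (S₁ S₂ : Set A) (C : Set A) (hC : C = S₁ ∩ S₂)
    (M₁ M₂ : X → Option A)
    (hM₂ : codom M₂ ⊆ S₂)
    (hcoh : Coh C M₁ M₂)
    (γ₁ : X → Option A)
    (hdisj : dom M₁ ∩ dom γ₁ = ∅)
    (hcard : Cardinal.lift.{v} (Cardinal.mk ↥(dom M₂ ∪ dom γ₁)) < Cardinal.lift.{u} (Cardinal.mk ↥(S₂ \ S₁))) :
    ∃ γ₂ : X → Option A, dom γ₂ = dom γ₁ ∧ codom γ₂ ⊆ S₂ ∧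
      Coh C (union M₁ γ₁) (union M₂ γ₂) := by
  obtain ⟨f, hf, hM₂f⟩ := coh_iff_exists_renaming.1 hcoh
  have hcodom : codom M₂ = f '' codom M₁ := hM₂f ▸ codom_map M₁ f
  obtain ⟨e, he, heT⟩ := exists_injOn_mapsTo_fresh (M := M₂)
    (by rwa [hM₂f, dom_map, Set.disjoint_iff_inter_eq_empty]) hcard
  have hTC : Disjoint (S₂ \ S₁) C := hC ▸ Set.disjoint_sdiff_left.mono_right Set.inter_subset_left
  obtain ⟨g, hg, hgf, hgγ⟩ := hf.exists_extend he (hcodom ▸ heT) hTC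
  refine ⟨fun x => (γ₁ x).map g, dom_map γ₁ g, ?_, ?_⟩
  · rw [codom_map]
    exact (hgγ.mono_right (Set.union_subset (Set.union_subset (hcodom ▸ hM₂)
      (hC.trans_subset Set.inter_subset_right)) Set.sdiff_subset)).image_subset
  · rw [hM₂f, union_map_map hgf]
    exact coh_iff_exists_renaming.2 ⟨g, hg.mono (codom_union_subset M₁ γ₁), rfl⟩

/-- Single-step extension preserves coherence, existential form. -/
theorem stmt_9 {X : Type u} {A : Type v} (S₁ S₂ : Set A) (C : Set A) (hC : C = S₁ ∩ S₂)
    (M₁ M₂ : X → Option A)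
    (hM₁ : codom M₁ ⊆ S₁) (hM₂ : codom M₂ ⊆ S₂)
    (hcoh : Coh C M₁ M₂)
    (γ₁ : X → Option A) (hγ₁ : codom γ₁ ⊆ S₁)
    (hdisj : dom M₁ ∩ dom γ₁ = ∅)
    (hfin : (dom M₂ ∪ dom γ₁).Finite)
    (hcard : Cardinal.lift.{v} (Cardinal.mk ↥(dom M₂ ∪ dom γ₁)) < Cardinal.lift.{u} (Cardinal.mk ↥(S₂ \ S₁))) :
    ∃ γ₂ : X → Option A, dom γ₂ = dom γ₁ ∧ codom γ₂ ⊆ S₂ ∧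
      Coh C (union M₁ γ₁) (union M₂ γ₂) :=
  stmt_9_general S₁ S₂ C hC M₁ M₂ hM₂ hcoh γ₁ hdisj hcard
end
end
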